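/- arXiv:2210.07835 — 5 statements merged into one kernel-verified Lean document; each statement's English description precedes it below -/
import Mathlib

section
/- Let G be a finite connected simple graph containing a universal vertex. If G is complete then μt(G) = μ(G) = n(G), and if G is not complete then μt(G) = μ(G) = n(G) − 1. In particular every graph with a universal vertex satisfies μ(G) = μt(G). -/
open SimpleGraph

/-- Vertices `x` and `y` are `X`-visible in `G`: some shortest `x,y`-path has
no internal vertex in `X`. -/
def Visible {V : Type*} (G : SimpleGraph V) (X : Set V) (x y : V) : Prop :=
  ∃ p : G.Walk x y, p.length = G.dist x y ∧ ∀ v ∈ p.support, v ∈ X → v = x ∨ v = y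

/-- `X` is a mutual-visibility set of `G`: every two vertices of `X` are `X`-visible. -/
def IsMVSet {V : Type*} (G : SimpleGraph V) (X : Set V) : Prop :=
  ∀ x ∈ X, ∀ y ∈ X, Visible G X x y

/-- `X` is a total mutual-visibility set of `G`: every two vertices of `G` are
`X`-visible. -/
def IsTMVSet {V : Type*} (G : SimpleGraph V) (X : Set V) : Prop :=
  ∀ x y : V, Visible G X x y

/-- The mutual-visibility number of `G`: the maximum cardinality of a
mutual-visibility set. -/
noncomputable def mu {V : Type*} (G : SimpleGraph V) : ℕ :=
  sSup {n | ∃ X : Set V, IsMVSet G X ∧ X.ncard = n}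

/-- The total mutual-visibility number of `G`: the maximum cardinality of a total
mutual-visibility set. -/
noncomputable def muT {V : Type*} (G : SimpleGraph V) : ℕ :=
  sSup {n | ∃ X : Set V, IsTMVSet G X ∧ X.ncard = n}

/-- A feasible total mutual-visibility set: a total mutual-visibility set `S` such that
any two adjacent vertices of `S` have a common neighbor outside `S`. -/
def IsFeasibleTMVSet {V : Type*} (G : SimpleGraph V) (S : Set V) : Prop :=
  IsTMVSet G S ∧ ∀ x ∈ S, ∀ y ∈ S, G.Adj x y → ∃ z ∉ S, G.Adj x z ∧ G.Adj y z

/-- The strong product of two simple graphs. -/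
def strongProd {α β : Type*} (G : SimpleGraph α) (H : SimpleGraph β) :
    SimpleGraph (α × β) where
  Adj x y := (G.Adj x.1 y.1 ∧ x.2 = y.2) ∨ (x.1 = y.1 ∧ H.Adj x.2 y.2) ∨
    (G.Adj x.1 y.1 ∧ H.Adj x.2 y.2)
  symm := by
    constructor
    rintro ⟨a, b⟩ ⟨c, d⟩ (⟨h1, h2⟩ | ⟨h1, h2⟩ | ⟨h1, h2⟩)
    · exact Or.inl ⟨h1.symm, h2.symm⟩
    · exact Or.inr (Or.inl ⟨h1.symm, h2.symm⟩)
    · exact Or.inr (Or.inr ⟨h1.symm, h2.symm⟩)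
  loopless := by
    constructor
    rintro ⟨a, b⟩ (⟨h, _⟩ | ⟨_, h⟩ | ⟨h, _⟩)
    · exact G.irrefl h
    · exact H.irrefl h
    · exact G.irrefl h

/-- The iterated (associative) strong product of a finite family of graphs:
two tuples are adjacent iff they are distinct and agree or are adjacent in every
coordinate. -/
def strongProdPi {k : ℕ} {V : Fin k → Type*} (G : ∀ i, SimpleGraph (V i)) :
    SimpleGraph (∀ i, V i) where
  Adj x y := x ≠ y ∧ ∀ i, x i = y i ∨ (G i).Adj (x i) (y i)
  symm := by
    constructor
    rintro x y ⟨hne, h⟩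
    exact ⟨hne.symm, fun i => (h i).imp Eq.symm fun hh => (G i).adj_symm hh⟩
  loopless := ⟨fun x h => h.1 rfl⟩

/-- A universal vertex: adjacent to all other vertices. -/
def IsUniversal {V : Type*} (G : SimpleGraph V) (v : V) : Prop :=
  ∀ u : V, u ≠ v → G.Adj v u

/-- A cut vertex: its removal disconnects the graph. -/
def IsCutVertex {V : Type*} (G : SimpleGraph V) (v : V) : Prop :=
  ¬ (G.induce ({v}ᶜ : Set V)).Preconnected

/-- An induced path: a path with no chords between its vertices. -/
def IsInducedPath {V : Type*} (G : SimpleGraph V) {u v : V} (p : G.Walk u v) : Prop :=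
  p.IsPath ∧ ∀ a b : V, a ∈ p.support → b ∈ p.support → G.Adj a b → s(a, b) ∈ p.edges

/-- A block graph: a connected graph in which every pair of vertices is joined
by a unique induced path. -/
def IsBlockGraph {V : Type*} (G : SimpleGraph V) : Prop :=
  G.Connected ∧ ∀ u v : V, ∃! p : G.Walk u v, IsInducedPath G p

/-- A convex set of vertices: every shortest path of `G` between two of its
vertices stays inside the set. -/
def IsConvexSet {V : Type*} (G : SimpleGraph V) (A : Set V) : Prop :=
  ∀ x ∈ A, ∀ y ∈ A, ∀ p : G.Walk x y, p.length = G.dist x y → ∀ v ∈ p.support, v ∈ A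

/-- A cactus graph: a connected graph in which every edge lies in at most one cycle,
i.e. two cycles sharing an edge have the same edge set. -/
def IsCactus {V : Type*} (G : SimpleGraph V) : Prop :=
  G.Connected ∧ ∀ (v : V) (p q : G.Walk v v), p.IsCycle → q.IsCycle →
    ∀ e, e ∈ p.edges → e ∈ q.edges → ∀ e', e' ∈ p.edges ↔ e' ∈ q.edges

/-- A cograph: obtained from a single vertex by repeatedly adding twins, i.e. there is
an enumeration of the vertices in which every vertex except the first is, at the
moment of its addition, a (true or false) twin of some earlier vertex in the induced
subgraph on the vertices added so far. -/
def IsCograph {V : Type*} (G : SimpleGraph V) : Prop :=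
  ∃ l : List V, l.Nodup ∧ (∀ v : V, v ∈ l) ∧
    ∀ i : Fin l.length, (i : ℕ) ≠ 0 →
      ∃ j : Fin l.length, (j : ℕ) < (i : ℕ) ∧
        ∀ z ∈ l.take ((i : ℕ) + 1), z ≠ l.get i → z ≠ l.get j →
          (G.Adj (l.get i) z ↔ G.Adj (l.get j) z)

/-- An enabling vertex: a vertex `v` adjacent to every vertex `u` of `G - v` whose
degree in `G - v` is less than `n(G) - 2`. -/
def IsEnabling {V : Type*} [Fintype V] (G : SimpleGraph V) (v : V) : Prop :=
  ∀ u : V, u ≠ v → (G.neighborSet u \ {v}).ncard < Fintype.card V - 2 → G.Adj v u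

/-!
If `v` is universal, two non-adjacent vertices are at distance 2 with the geodesic through `v`,
so `V ∖ {v}` is a total mutual-visibility set. Conversely, `V` itself is a mutual-visibility set
only when every two vertices are adjacent. Hence both numbers equal `n(G)` or `n(G) - 1`.
-/

namespace Visible

variable {V : Type*} {G : SimpleGraph V} (X : Set V)

lemma refl (x : V) : Visible G X x x :=
  ⟨Walk.nil, by simp, by simp⟩

lemma of_adj {x y : V} (h : G.Adj x y) : Visible G X x y :=
  ⟨h.toWalk, by simp [dist_eq_one_iff_adj.mpr h], by simp⟩

lemma of_adj_adj_of_not_adj {a b v : V} (hav : G.Adj a v) (hvb : G.Adj v b) (hab : a ≠ b)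
    (hnadj : ¬ G.Adj a b) (hvX : v ∉ X) : Visible G X a b := by
  let p : G.Walk a b := .cons hav (.cons hvb .nil)
  have hdist_pos : 0 < G.dist a b := p.reachable.pos_dist_of_ne hab
  have hdist_ne_one : G.dist a b ≠ 1 := fun h => hnadj (dist_eq_one_iff_adj.mp h)
  have hdist_le : G.dist a b ≤ 2 := dist_le p
  refine ⟨p, by simp only [p, Walk.length_cons, Walk.length_nil]; omega, ?_⟩
  intro w hw hwX
  simp only [p, Walk.support_cons, Walk.support_nil, List.mem_cons,
    List.not_mem_nil, or_false] at hw
  rcases hw with rfl | rfl | rfl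
  · exact Or.inl rfl
  · exact absurd hwX hvX
  · exact Or.inr rfl

end Visible

section

variable {V : Type*} {G : SimpleGraph V}

lemma IsTMVSet.isMVSet {X : Set V} (hX : IsTMVSet G X) : IsMVSet G X :=
  fun x _ y _ => hX x y

lemma isTMVSet_univ_top : IsTMVSet (⊤ : SimpleGraph V) Set.univ := by
  intro x y
  by_cases hxy : x = y
  · exact hxy ▸ Visible.refl _ x
  · exact Visible.of_adj _ ((top_adj x y).mpr hxy)

/-- The second vertex of a shortest `x,y`-path lies in `univ`, so it must be `y`. -/
lemma eq_top_of_isMVSet_univ (h : IsMVSet G Set.univ) : G = ⊤ := by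
  ext x y
  refine ⟨Adj.ne, fun hxy => ?_⟩
  obtain ⟨p, -, hp⟩ := h x trivial y trivial
  cases p with
  | nil => exact absurd rfl hxy.ne
  | @cons _ w _ hstep q =>
    rcases hp w (by simp) trivial with rfl | rfl
    · exact absurd hstep G.irrefl
    · exact hstep

lemma isTMVSet_compl_singleton {v : V} (hv : _root_.IsUniversal G v) : IsTMVSet G {v}ᶜ := by
  intro a b
  by_cases hab : a = b
  · exact hab ▸ Visible.refl _ a
  by_cases hadj : G.Adj a b
  · exact Visible.of_adj _ hadj
  have hav : a ≠ v := by
    rintro rfl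
    exact hadj (hv b (Ne.symm hab))
  have hbv : b ≠ v := by
    rintro rfl
    exact hadj (hv a hab).symm
  exact Visible.of_adj_adj_of_not_adj _ (hv a hav).symm (hv b hbv) hab hadj
    (Set.notMem_compl_iff.mpr rfl)

lemma sSup_ncard_eq_of_forall_ncard_le {P : Set V → Prop} {X : Set V} (hX : P X)
    (hmax : ∀ Y, P Y → Y.ncard ≤ X.ncard) :
    sSup {n | ∃ Y : Set V, P Y ∧ Y.ncard = n} = X.ncard :=
  IsGreatest.csSup_eq ⟨⟨X, hX, rfl⟩, by rintro _ ⟨Y, hY, rfl⟩; exact hmax Y hY⟩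

lemma muT_eq_and_mu_eq_of_isTMVSet {X : Set V} (hX : IsTMVSet G X)
    (hmax : ∀ Y, IsMVSet G Y → Y.ncard ≤ X.ncard) : muT G = X.ncard ∧ mu G = X.ncard :=
  ⟨sSup_ncard_eq_of_forall_ncard_le hX fun Y hY => hmax Y hY.isMVSet,
    sSup_ncard_eq_of_forall_ncard_le hX.isMVSet hmax⟩

lemma ncard_lt_card_of_isMVSet [Finite V] (hG : G ≠ ⊤) {Y : Set V} (hY : IsMVSet G Y) :
    Y.ncard < Nat.card V :=
  Set.ncard_lt_card fun h => hG (eq_top_of_isMVSet_univ (h ▸ hY))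

end

theorem stmt_2_general {V : Type*} [Fintype V] (G : SimpleGraph V)
    (hu : ∃ v, _root_.IsUniversal G v) :
    (G = ⊤ → muT G = Fintype.card V ∧ mu G = Fintype.card V) ∧
    (G ≠ ⊤ → muT G = Fintype.card V - 1 ∧ mu G = Fintype.card V - 1) ∧
    mu G = muT G := by
  have hcomplete : G = ⊤ → muT G = Fintype.card V ∧ mu G = Fintype.card V := by
    rintro rfl
    simpa using muT_eq_and_mu_eq_of_isTMVSet isTMVSet_univ_top
      fun Y _ => (Set.ncard_le_card Y).trans_eq (Set.ncard_univ V).symm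
  have hnoncomplete : G ≠ ⊤ →
      muT G = Fintype.card V - 1 ∧ mu G = Fintype.card V - 1 := by
    intro hG
    obtain ⟨v, hv⟩ := hu
    have hcard : ({v}ᶜ : Set V).ncard = Fintype.card V - 1 := by
      rw [Set.ncard_compl, Set.ncard_singleton, Nat.card_eq_fintype_card]
    rw [← hcard]
    refine muT_eq_and_mu_eq_of_isTMVSet (isTMVSet_compl_singleton hv) fun Y hY => ?_
    have := ncard_lt_card_of_isMVSet hG hY
    rw [Nat.card_eq_fintype_card] at this
    omega
  refine ⟨hcomplete, hnoncomplete, ?_⟩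
  by_cases h : G = ⊤
  · rw [(hcomplete h).1, (hcomplete h).2]
  · rw [(hnoncomplete h).1, (hnoncomplete h).2]

theorem stmt_2 {V : Type*} [Fintype V] (G : SimpleGraph V) (hG : G.Connected)
    (hu : ∃ v, _root_.IsUniversal G v) :
    (G = ⊤ → muT G = Fintype.card V ∧ mu G = Fintype.card V) ∧
    (G ≠ ⊤ → muT G = Fintype.card V - 1 ∧ mu G = Fintype.card V - 1) ∧
    mu G = muT G :=
  stmt_2_general G hu
end

section
/- Let G and H be finite connected simple graphs, each with at least two vertices, such that both G and H admit feasible maximum total mutual-visibility sets. Then μt(G ⊠ H) ≥ μt(G)·n(H) + μt(H)·n(G) − μt(G)·μt(H). -/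
open SimpleGraph

/-!
Take feasible maximum total mutual-visibility sets `S` of `G` and `T` of `H`. The set
`X = S × V(H) ∪ V(G) × T` has `μt(G) n(H) + μt(H) n(G) − μt(G) μt(H)` elements, and it is a total
mutual-visibility set of `G ⊠ H`. Indeed, no walk of `G ⊠ H` is shorter than the distances of its
projections, so it suffices to go from `(g, h)` to `(g', h')` in `k = max (d(g, g'), d(h, h'))`
steps, each coordinate following a lazy walk (one that may also stay put) whose inner vertices
avoid `S`, resp. `T`. Shortest `S`-avoiding paths are such lazy walks, and a lazy walk of
length `n` can be stretched to length `n + 1`: for `n ≥ 2` repeat an inner vertex, for `n ≤ 1`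
detour through a vertex outside `S` next to both ends, which exists by feasibility and
`n(G) ≥ 2`.
-/

section LazyWalks

variable {V W : Type*} {G : SimpleGraph V} {G' : SimpleGraph W}

theorem SimpleGraph.exists_walk_of_lazy (σ : ℕ → V) :
    ∀ n, (∀ i < n, σ i = σ (i + 1) ∨ G.Adj (σ i) (σ (i + 1))) →
      ∃ p : G.Walk (σ 0) (σ n), p.length ≤ n ∧ ∀ v ∈ p.support, ∃ i ≤ n, σ i = v
  | 0, _ => ⟨.nil, le_rfl, by simp⟩
  | n + 1, hσ => by
    obtain ⟨p, hlen, hsupp⟩ := exists_walk_of_lazy σ n fun i hi => hσ i (by omega)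
    have hsupp' : ∀ v ∈ p.support, ∃ i ≤ n + 1, σ i = v := fun v hv =>
      (hsupp v hv).imp fun i hi => ⟨by omega, hi.2⟩
    rcases hσ n (by omega) with heq | hadj
    · exact ⟨p.copy rfl heq, by simp only [Walk.length_copy]; omega,
        by simpa only [Walk.support_copy] using hsupp'⟩
    · refine ⟨p.concat hadj, by simp only [Walk.length_concat]; omega, fun v hv => ?_⟩
      rw [Walk.support_concat, List.mem_append, List.mem_singleton] at hv
      rcases hv with hv | rfl
      · exact hsupp' v hv
      · exact ⟨n + 1, le_rfl, rfl⟩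

theorem SimpleGraph.dist_map_le_length (f : V → W)
    (hf : ∀ a b, G.Adj a b → f a = f b ∨ G'.Adj (f a) (f b)) {x y : V} (p : G.Walk x y) :
    G'.dist (f x) (f y) ≤ p.length := by
  obtain ⟨q, hq, -⟩ := exists_walk_of_lazy (G := G') (fun i => f (p.getVert i)) p.length
    fun i hi => hf _ _ (p.adj_getVert_succ hi)
  simpa only [Walk.getVert_zero, Walk.getVert_length] using (dist_le q).trans hq

/-- There is a lazy walk `σ 0 = x, …, σ n = y` (consecutive terms equal or adjacent) whose inner
terms avoid `X`. -/
def LazyVisible (G : SimpleGraph V) (X : Set V) (x y : V) (n : ℕ) : Prop :=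
  ∃ σ : ℕ → V, σ 0 = x ∧ σ n = y ∧ (∀ i < n, σ i = σ (i + 1) ∨ G.Adj (σ i) (σ (i + 1))) ∧
    ∀ i, 0 < i → i < n → σ i ∉ X

variable {X : Set V} {x y : V} {n : ℕ}

theorem Visible.lazyVisible (h : Visible G X x y) : LazyVisible G X x y (G.dist x y) := by
  obtain ⟨p, hp, hvis⟩ := h
  refine ⟨p.getVert, p.getVert_zero, hp ▸ p.getVert_length,
    fun i hi => Or.inr (p.adj_getVert_succ (hp ▸ hi)), fun i hi0 hin hiX => ?_⟩
  have hinj := (p.isPath_of_length_eq_dist hp).getVert_injOn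
  have hi : i ∈ {j | j ≤ p.length} := by simp only [Set.mem_ofPred_eq]; omega
  rcases hvis _ (p.getVert_mem_support i) hiX with hx | hy
  · have := hinj hi (by simp) (hx.trans p.getVert_zero.symm)
    omega
  · have := hinj hi (by simp) (hy.trans p.getVert_length.symm)
    omega

theorem LazyVisible.visible (h : LazyVisible G X x y n)
    (hn : ∀ p : G.Walk x y, n ≤ p.length) : Visible G X x y := by
  obtain ⟨σ, rfl, rfl, hstep, havoid⟩ := h
  obtain ⟨q, hq, hsupp⟩ := exists_walk_of_lazy σ n hstep
  obtain ⟨p, hp⟩ := q.reachable.exists_walk_length_eq_dist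
  refine ⟨q, le_antisymm (hp ▸ hq.trans (hn p)) (dist_le q), fun v hv hvX => ?_⟩
  obtain ⟨i, hi, rfl⟩ := hsupp v hv
  rcases Nat.eq_zero_or_pos i with rfl | hi0
  · exact Or.inl rfl
  · rcases hi.lt_or_eq with hin | rfl
    · exact absurd hvX (havoid i hi0 hin)
    · exact Or.inr rfl

end LazyWalks

section Feasible

variable {V : Type*} [Nontrivial V] {G : SimpleGraph V} {S : Set V}

theorem IsFeasibleTMVSet.exists_adj_notMem (hS : IsFeasibleTMVSet G S) {x : V} (hx : x ∈ S) :
    ∃ z ∉ S, G.Adj x z := by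
  obtain ⟨y, hy⟩ := exists_ne x
  obtain ⟨p, -, -⟩ := hS.1 x y
  have hadj := p.adj_snd (Walk.not_nil_of_ne hy.symm)
  by_cases hsnd : p.snd ∈ S
  · obtain ⟨z, hz, hxz, -⟩ := hS.2 x hx _ hsnd hadj
    exact ⟨z, hz, hxz⟩
  · exact ⟨_, hsnd, hadj⟩

theorem IsFeasibleTMVSet.exists_notMem_between (hS : IsFeasibleTMVSet G S) {x y : V}
    (hxy : x = y ∨ G.Adj x y) : ∃ z ∉ S, (x = z ∨ G.Adj x z) ∧ (z = y ∨ G.Adj z y) := by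
  by_cases hx : x ∈ S
  · by_cases hy : y ∈ S
    · rcases hxy with rfl | hxy
      · obtain ⟨z, hz, hxz⟩ := hS.exists_adj_notMem hx
        exact ⟨z, hz, Or.inr hxz, Or.inr hxz.symm⟩
      · obtain ⟨z, hz, hxz, hyz⟩ := hS.2 x hx y hy hxy
        exact ⟨z, hz, Or.inr hxz, Or.inr hyz.symm⟩
    · exact ⟨y, hy, hxy, Or.inl rfl⟩
  · exact ⟨x, hx, Or.inl rfl, hxy⟩

theorem LazyVisible.succ (hS : IsFeasibleTMVSet G S) {x y : V} {n : ℕ}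
    (h : LazyVisible G S x y n) : LazyVisible G S x y (n + 1) := by
  obtain ⟨σ, rfl, rfl, hstep, havoid⟩ := h
  rcases (by omega : n = 0 ∨ n = 1 ∨ 2 ≤ n) with rfl | rfl | hn
  · exact ⟨fun _ => σ 0, rfl, rfl, fun _ _ => Or.inl rfl, fun i _ _ => by omega⟩
  · obtain ⟨z, hz, hxz, hzy⟩ := hS.exists_notMem_between (hstep 0 one_pos)
    refine ⟨fun i => if i = 0 then σ 0 else if i = 1 then z else σ 1, rfl, rfl,
      fun i hi => ?_, fun i hi0 hi => ?_⟩
    · interval_cases i <;> simpa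
    · obtain rfl : i = 1 := by omega
      simpa
  · refine ⟨fun i => if i ≤ 1 then σ i else σ (i - 1), rfl, by simp [show ¬ n = 0 by omega],
      fun i hi => ?_, fun i hi0 hi => ?_⟩
    · rcases (by omega : i = 0 ∨ i = 1 ∨ 2 ≤ i) with rfl | rfl | hi2
      · simpa using hstep 0 (by omega)
      · simp
      · simpa [show ¬ i ≤ 1 by omega, show ¬ i + 1 ≤ 1 by omega,
          show i - 1 + 1 = i by omega] using hstep (i - 1) (by omega)
    · dsimp only
      split_ifs
      · exact havoid i hi0 (by omega)
      · exact havoid (i - 1) (by omega) (by omega)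

theorem IsFeasibleTMVSet.lazyVisible (hS : IsFeasibleTMVSet G S) (x y : V) {n : ℕ}
    (hn : G.dist x y ≤ n) : LazyVisible G S x y n := by
  induction n, hn using Nat.le_induction with
  | base => exact (hS.1 x y).lazyVisible
  | succ n _ ih => exact ih.succ hS

end Feasible

section StrongProduct

variable {α β : Type*} {G : SimpleGraph α} {H : SimpleGraph β}

theorem strongProd_eq_or_adj {a a' : α} {b b' : β} (ha : a = a' ∨ G.Adj a a')
    (hb : b = b' ∨ H.Adj b b') : (a, b) = (a', b') ∨ (strongProd G H).Adj (a, b) (a', b') := by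
  rcases ha with rfl | ha <;> rcases hb with rfl | hb
  · exact Or.inl rfl
  · exact Or.inr (Or.inr (Or.inl ⟨rfl, hb⟩))
  · exact Or.inr (Or.inl ⟨ha, rfl⟩)
  · exact Or.inr (Or.inr (Or.inr ⟨ha, hb⟩))

theorem dist_fst_le_length {x y : α × β} (W : (strongProd G H).Walk x y) :
    G.dist x.1 y.1 ≤ W.length :=
  dist_map_le_length Prod.fst (by
    rintro a b (⟨h, -⟩ | ⟨h, -⟩ | ⟨h, -⟩)
    exacts [Or.inr h, Or.inl h, Or.inr h]) W

theorem dist_snd_le_length {x y : α × β} (W : (strongProd G H).Walk x y) :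
    H.dist x.2 y.2 ≤ W.length :=
  dist_map_le_length Prod.snd (by
    rintro a b (⟨-, h⟩ | ⟨-, h⟩ | ⟨-, h⟩)
    exacts [Or.inl h, Or.inr h, Or.inr h]) W

theorem LazyVisible.prod {S : Set α} {T : Set β} {g g' : α} {h h' : β} {n : ℕ}
    (hg : LazyVisible G S g g' n) (hh : LazyVisible H T h h' n) :
    LazyVisible (strongProd G H) (S ×ˢ Set.univ ∪ Set.univ ×ˢ T) (g, h) (g', h') n := by
  obtain ⟨σ, rfl, rfl, hσ, hσS⟩ := hg
  obtain ⟨τ, rfl, rfl, hτ, hτT⟩ := hh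
  refine ⟨fun i => (σ i, τ i), rfl, rfl, fun i hi => strongProd_eq_or_adj (hσ i hi) (hτ i hi),
    fun i hi0 hin => ?_⟩
  simp [hσS i hi0 hin, hτT i hi0 hin]

theorem IsFeasibleTMVSet.isTMVSet_strongProd [Nontrivial α] [Nontrivial β] {S : Set α}
    {T : Set β} (hS : IsFeasibleTMVSet G S) (hT : IsFeasibleTMVSet H T) :
    IsTMVSet (strongProd G H) (S ×ˢ Set.univ ∪ Set.univ ×ˢ T) := by
  rintro ⟨g, h⟩ ⟨g', h'⟩
  exact ((hS.lazyVisible g g' (le_max_left _ (H.dist h h'))).prod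
    (hT.lazyVisible h h' (le_max_right (G.dist g g') _))).visible
    fun W => max_le (dist_fst_le_length W) (dist_snd_le_length W)

end StrongProduct

theorem Set.ncard_prod_univ_union_univ_prod_add {α β : Type*} [Finite α] [Finite β]
    (S : Set α) (T : Set β) :
    (S ×ˢ Set.univ ∪ Set.univ ×ˢ T).ncard + S.ncard * T.ncard =
      S.ncard * Nat.card β + Nat.card α * T.ncard := by
  have hinter : S ×ˢ Set.univ ∩ Set.univ ×ˢ T = S ×ˢ T := by
    rw [Set.prod_inter_prod, Set.inter_univ, Set.univ_inter]
  rw [← Set.ncard_prod, ← hinter, Set.ncard_union_add_ncard_inter]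
  simp only [Set.ncard_prod, Set.ncard_univ]

theorem IsTMVSet.ncard_le_muT {V : Type*} [Finite V] {G : SimpleGraph V} {X : Set V}
    (hX : IsTMVSet G X) : X.ncard ≤ muT G :=
  le_csSup ⟨Nat.card V, by rintro _ ⟨Y, -, rfl⟩; exact Y.ncard_le_card⟩ ⟨X, hX, rfl⟩

theorem stmt_8_general {α β : Type*} [Fintype α] [Fintype β]
    (G : SimpleGraph α) (H : SimpleGraph β)
    (hα : 2 ≤ Fintype.card α) (hβ : 2 ≤ Fintype.card β)
    (hfG : ∃ S : Set α, IsFeasibleTMVSet G S ∧ S.ncard = muT G)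
    (hfH : ∃ S : Set β, IsFeasibleTMVSet H S ∧ S.ncard = muT H) :
    muT G * Fintype.card β + muT H * Fintype.card α - muT G * muT H
      ≤ muT (strongProd G H) := by
  obtain ⟨S, hS, hSμ⟩ := hfG
  obtain ⟨T, hT, hTμ⟩ := hfH
  have : Nontrivial α := Fintype.one_lt_card_iff_nontrivial.mp hα
  have : Nontrivial β := Fintype.one_lt_card_iff_nontrivial.mp hβ
  have hX := (hS.isTMVSet_strongProd hT).ncard_le_muT
  have hcard := Set.ncard_prod_univ_union_univ_prod_add S T
  rw [Nat.card_eq_fintype_card, Nat.card_eq_fintype_card] at hcard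
  rw [← hSμ, ← hTμ, tsub_le_iff_right]
  linarith [Nat.mul_comm T.ncard (Fintype.card α)]

theorem stmt_8 {α β : Type*} [Fintype α] [Fintype β]
    (G : SimpleGraph α) (H : SimpleGraph β) (hG : G.Connected) (hH : H.Connected)
    (hα : 2 ≤ Fintype.card α) (hβ : 2 ≤ Fintype.card β)
    (hfG : ∃ S : Set α, IsFeasibleTMVSet G S ∧ S.ncard = muT G)
    (hfH : ∃ S : Set β, IsFeasibleTMVSet H S ∧ S.ncard = muT H) :
    muT G * Fintype.card β + muT H * Fintype.card α - muT G * muT H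
      ≤ muT (strongProd G H) :=
  stmt_8_general G H hα hβ hfG hfH
end

section
/- Let k ≥ 2 and let n_1, …, n_k be integers with n_i ≥ 3 for all i ∈ [k]. Then the strong product of paths H_k = P_{n_1} ⊠ ⋯ ⊠ P_{n_k} satisfies μ(H_k) = ∏_{i=1}^k n_i − ∏_{i=1}^k (n_i − 2). -/
open SimpleGraph

namespace MVAux

/-! ### Nat helpers -/

def toward (a b t : ℕ) : ℕ := if a ≤ b then min (a + t) b else max (a - t) b

def clampN (m v : ℕ) : ℕ := min (max v 1) (m - 2)

lemma nat_dist_le_iff {a b c : ℕ} : Nat.dist a b ≤ c ↔ a ≤ b + c ∧ b ≤ a + c := by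
  simp [Nat.dist]; omega

lemma toward_zero (a b : ℕ) : toward a b 0 = a := by
  simp only [toward]; split_ifs <;> omega

lemma toward_eq {a b t : ℕ} (h : Nat.dist a b ≤ t) : toward a b t = b := by
  simp only [toward, Nat.dist] at *; split_ifs <;> omega

lemma toward_step (a b t : ℕ) : Nat.dist (toward a b t) (toward a b (t + 1)) ≤ 1 := by
  simp only [toward, Nat.dist]; split_ifs <;> omega

lemma toward_ne {a b t : ℕ} (h : t < Nat.dist a b) : toward a b t ≠ toward a b (t + 1) := by
  simp only [toward, Nat.dist] at *; split_ifs <;> omega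

lemma toward_le_max (a b t : ℕ) : toward a b t ≤ max a b := by
  simp only [toward]; split_ifs <;> omega

lemma toward_internal {a b t : ℕ} (h1 : 0 < t) (h2 : t < Nat.dist a b) :
    min a b < toward a b t ∧ toward a b t < max a b := by
  simp only [toward, Nat.dist] at *; split_ifs <;> omega

lemma clamp_near {m a v : ℕ} (hm : 3 ≤ m) (ha : a < m) (hv : v < m)
    (h : Nat.dist a v ≤ 1) : Nat.dist a (clampN m v) ≤ 1 := by
  simp only [clampN, Nat.dist, Nat.min_def, Nat.max_def] at *
  split_ifs <;> omega

lemma clamp_lip {m u v : ℕ} (h : Nat.dist u v ≤ 1) :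
    Nat.dist (clampN m u) (clampN m v) ≤ 1 := by
  simp only [clampN, Nat.dist, Nat.min_def, Nat.max_def] at *
  split_ifs <;> omega

lemma toward_dist_to_b (a b t : ℕ) : Nat.dist (toward a b t) b ≤ Nat.dist a b - t := by
  simp only [toward, Nat.dist]; split_ifs <;> omega

lemma gstep_nat (m a b d t : ℕ) (hm : 3 ≤ m) (ha : a < m) (hb : b < m)
    (hab : Nat.dist a b ≤ d) (ht : t < d) :
    Nat.dist (if t = 0 then a else if d ≤ t then b else clampN m (toward a b t))
      (if t + 1 = 0 then a else if d ≤ t + 1 then b else clampN m (toward a b (t + 1))) ≤ 1 := by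
  have htow : ∀ s, toward a b s < m := fun s =>
    lt_of_le_of_lt (toward_le_max a b s) (max_lt ha hb)
  have htow : ∀ s, toward a b s < m := fun s =>
    lt_of_le_of_lt (toward_le_max a b s) (max_lt ha hb)
  by_cases h0 : t = 0 <;> by_cases hd : d ≤ t + 1 <;>
    simp only [h0, hd, Nat.succ_ne_zero, ite_true, ite_false, if_true, if_false, if_pos, if_neg,
      not_false_iff, le_refl]
  · -- t = 0, t + 1 = d
    subst h0
    rw [if_pos hd]
    have : d = 1 := by omega
    subst this
    simpa using hab
  · -- t = 0, t + 1 < d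
    subst h0
    rw [if_neg hd]
    have h1 : Nat.dist a (toward a b (0 + 1)) ≤ 1 := by
      have := toward_step a b 0; rwa [toward_zero] at this
    exact clamp_near hm ha (htow _) h1
  · -- 0 < t, t + 1 = d
    rw [if_neg (by omega : ¬ d ≤ t)]
    have h1 : Nat.dist (toward a b t) b ≤ 1 :=
      le_trans (toward_dist_to_b a b t) (by omega)
    have h2 := clamp_near hm hb (htow t) (by rwa [Nat.dist_comm] at h1)
    rwa [Nat.dist_comm]
  · -- middle
    rw [if_neg (by omega : ¬ d ≤ t)]
    exact clamp_lip (toward_step a b t)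

/-! ### generic walk builder -/

variable {V : Type*} {G : SimpleGraph V}

def mkWalk (G : SimpleGraph V) (f : ℕ → V) :
    (d : ℕ) → (∀ t, t < d → G.Adj (f t) (f (t + 1))) → G.Walk (f 0) (f d)
  | 0, _ => Walk.nil
  | d + 1, h =>
    (mkWalk G f d fun t ht => h t (Nat.lt_succ_of_lt ht)).concat (h d (Nat.lt_succ_self d))

lemma mkWalk_length (f : ℕ → V) : ∀ (d : ℕ) (h : ∀ t, t < d → G.Adj (f t) (f (t + 1))),
    (mkWalk G f d h).length = d := by
  intro d
  induction d with
  | zero => intro h; rfl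
  | succ d ih => intro h; simp [mkWalk, Walk.length_concat, ih]

lemma mkWalk_support (f : ℕ → V) : ∀ (d : ℕ) (h : ∀ t, t < d → G.Adj (f t) (f (t + 1)))
    (v : V), v ∈ (mkWalk G f d h).support → ∃ t, t ≤ d ∧ v = f t := by
  intro d
  induction d with
  | zero =>
    intro h v hv
    simp only [mkWalk, Walk.support_nil, List.mem_singleton] at hv
    exact ⟨0, le_refl _, hv⟩
  | succ d ih =>
    intro h v hv
    simp only [mkWalk, Walk.support_concat, List.concat_eq_append, List.mem_append,
      List.mem_singleton] at hv
    rcases hv with hv | hv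
    · obtain ⟨t, ht, rfl⟩ := ih _ v hv
      exact ⟨t, by omega, rfl⟩
    · exact ⟨d + 1, le_refl _, hv⟩

/-! ### products of paths -/

variable {k : ℕ} {n : Fin k → ℕ}

abbrev PV (n : Fin k → ℕ) := ∀ i, Fin (n i)

abbrev PGr (n : Fin k → ℕ) : SimpleGraph (PV n) :=
  strongProdPi fun i => SimpleGraph.pathGraph (n i)

lemma coord_iff {m : ℕ} (u v : Fin m) :
    (u = v ∨ (SimpleGraph.pathGraph m).Adj u v) ↔ Nat.dist (u : ℕ) (v : ℕ) ≤ 1 := by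
  rw [pathGraph_adj, Fin.ext_iff]
  simp only [Nat.dist]
  omega

lemma adj_iff {x y : PV n} :
    (PGr n).Adj x y ↔ x ≠ y ∧ ∀ i, Nat.dist (x i : ℕ) (y i : ℕ) ≤ 1 := by
  constructor
  · rintro ⟨hne, h⟩
    exact ⟨hne, fun i => (coord_iff _ _).1 (h i)⟩
  · rintro ⟨hne, h⟩
    exact ⟨hne, fun i => (coord_iff _ _).2 (h i)⟩

lemma walk_lip {x y : PV n} (p : (PGr n).Walk x y) (i : Fin k) :
    Nat.dist (x i : ℕ) (y i : ℕ) ≤ p.length := by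
  induction p with
  | nil => simp [Nat.dist]
  | @cons a z b h q ih =>
    have h1 := (adj_iff.1 h).2 i
    have h2 := Nat.dist.triangle_inequality (a i : ℕ) (z i : ℕ) (b i : ℕ)
    simp only [Walk.length_cons]
    omega

lemma forced {x y : PV n} (p : (PGr n).Walk x y) :
    ∀ (m : ℕ) (v : PV n), (∀ i, (y i : ℕ) = x i + p.length) → m ≤ p.length →
      (∀ i, (v i : ℕ) = x i + m) → v ∈ p.support := by
  induction p with
  | nil =>
    intro m v hy hm hv
    simp only [Walk.length_nil, Nat.le_zero] at hm
    subst hm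
    simp only [Walk.support_nil, List.mem_singleton]
    exact funext fun i => Fin.ext (by have := hv i; omega)
  | @cons a z b h q ih =>
    intro m v hy hm hv
    simp only [Walk.length_cons] at hy hm
    have hz : ∀ i, (z i : ℕ) = a i + 1 := by
      intro i
      have h1 := (adj_iff.1 h).2 i
      have h2 := walk_lip q i
      have h3 := hy i
      rw [nat_dist_le_iff] at h1 h2
      omega
    rcases Nat.eq_zero_or_pos m with rfl | hm0
    · have hvx : v = a := funext fun i => Fin.ext (by rw [hv i]; omega)
      simp [hvx]
    · obtain ⟨m', rfl⟩ : ∃ m', m = m' + 1 := ⟨m - 1, by omega⟩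
      have hmem : v ∈ q.support := by
        refine ih m' v (fun i => by have := hy i; have := hz i; omega) (by omega)
          (fun i => by have := hv i; have := hz i; omega)
      simp [Walk.support_cons, hmem]

/-- Chebyshev distance. -/
def D (x y : PV n) : ℕ := Finset.univ.sup fun i => Nat.dist (x i : ℕ) (y i : ℕ)

lemma dist_coord_le_D (x y : PV n) (i : Fin k) : Nat.dist (x i : ℕ) (y i : ℕ) ≤ D x y := by
  rw [D]; exact Finset.le_sup (f := fun i => Nat.dist (x i : ℕ) (y i : ℕ)) (Finset.mem_univ i)

lemma univ_nonempty_of_D_pos {x y : PV n} (h : 0 < D x y) :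
    (Finset.univ : Finset (Fin k)).Nonempty := by
  rcases (Finset.univ : Finset (Fin k)).eq_empty_or_nonempty with he | hne
  · rw [D, he, Finset.sup_empty] at h; exact absurd h (by simp)
  · exact hne

def fwd (x y : PV n) (t : ℕ) : PV n := fun i =>
  ⟨toward (x i : ℕ) (y i : ℕ) t,
    lt_of_le_of_lt (toward_le_max _ _ _) (max_lt (x i).isLt (y i).isLt)⟩

lemma fwd_zero (x y : PV n) : fwd x y 0 = x :=
  funext fun i => Fin.ext (toward_zero _ _)

lemma fwd_last (x y : PV n) : fwd x y (D x y) = y :=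
  funext fun i => Fin.ext (toward_eq (dist_coord_le_D x y i))

lemma fwd_adj (x y : PV n) (t : ℕ) (ht : t < D x y) :
    (PGr n).Adj (fwd x y t) (fwd x y (t + 1)) := by
  refine adj_iff.2 ⟨?_, fun i => toward_step _ _ _⟩
  obtain ⟨j, -, hj⟩ := Finset.exists_mem_eq_sup Finset.univ
    (univ_nonempty_of_D_pos (x := x) (y := y) (by omega)) (fun i => Nat.dist (x i : ℕ) (y i : ℕ))
  intro hcon
  have hc : toward (x j : ℕ) (y j : ℕ) t = toward (x j : ℕ) (y j : ℕ) (t + 1) :=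
    congrArg Fin.val (congrFun hcon j)
  exact toward_ne (by rw [← hj]; exact ht) hc

lemma dist_eq (x y : PV n) : (PGr n).dist x y = D x y := by
  refine le_antisymm ?_ ?_
  · have h := SimpleGraph.dist_le
      ((mkWalk (PGr n) (fwd x y) (D x y) (fun t ht => fwd_adj x y t ht)).copy
        (fwd_zero x y) (fwd_last x y))
    rwa [Walk.length_copy, mkWalk_length] at h
  · obtain ⟨q, hq⟩ := Reachable.exists_walk_length_eq_dist
      (⟨(mkWalk (PGr n) (fwd x y) (D x y) (fun t ht => fwd_adj x y t ht)).copy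
        (fwd_zero x y) (fwd_last x y)⟩ : (PGr n).Reachable x y)
    rw [← hq, D]
    exact Finset.sup_le fun i _ => walk_lip q i

/-! ### the boundary mutual-visibility set -/

def Inter (n : Fin k → ℕ) : Set (PV n) :=
  {w | ∀ i, 1 ≤ (w i : ℕ) ∧ (w i : ℕ) ≤ n i - 2}

def gseq (x y : PV n) (t : ℕ) : PV n := fun i =>
  if t = 0 then x i
  else if D x y ≤ t then y i
  else ⟨clampN (n i) (toward (x i : ℕ) (y i : ℕ) t),
    lt_of_le_of_lt (Nat.min_le_right _ _) (by have := (x i).isLt; omega)⟩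

lemma gseq_val (x y : PV n) (t : ℕ) (i : Fin k) :
    (gseq x y t i : ℕ) = if t = 0 then (x i : ℕ) else if D x y ≤ t then (y i : ℕ)
      else clampN (n i) (toward (x i : ℕ) (y i : ℕ) t) := by
  simp only [gseq, apply_ite Fin.val]

lemma gseq_zero (x y : PV n) : gseq x y 0 = x :=
  funext fun i => Fin.ext (by rw [gseq_val]; simp)

lemma gseq_last (x y : PV n) (h : 0 < D x y) : gseq x y (D x y) = y :=
  funext fun i => Fin.ext (by rw [gseq_val, if_neg (by omega), if_pos (le_refl _)])

lemma gseq_adj (hn : ∀ i, 3 ≤ n i) (x y : PV n) (t : ℕ) (ht : t < D x y) :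
    (PGr n).Adj (gseq x y t) (gseq x y (t + 1)) := by
  refine adj_iff.2 ⟨?_, fun i => ?_⟩
  · obtain ⟨j, -, hj⟩ := Finset.exists_mem_eq_sup Finset.univ
      (univ_nonempty_of_D_pos (x := x) (y := y) (by omega))
      (fun i => Nat.dist (x i : ℕ) (y i : ℕ))
    have hDj : D x y = Nat.dist (x j : ℕ) (y j : ℕ) := hj
    have hval : ∀ s, s ≤ D x y → (gseq x y s j : ℕ) = toward (x j : ℕ) (y j : ℕ) s := by
      intro s hs
      rw [gseq_val]
      split_ifs with h1 h2
      · subst h1; exact (toward_zero _ _).symm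
      · exact (toward_eq (hDj ▸ h2)).symm
      · have hint := toward_internal (a := (x j : ℕ)) (b := (y j : ℕ))
          (Nat.pos_of_ne_zero h1) (by rw [← hDj]; omega)
        have hxj := (x j).isLt
        have hyj := (y j).isLt
        simp only [clampN]
        omega
    intro hcon
    have hc := congrArg Fin.val (congrFun hcon j)
    rw [hval t (by omega), hval (t + 1) (by omega)] at hc
    exact toward_ne (by rw [← hDj]; exact ht) hc
  · rw [gseq_val, gseq_val]
    exact gstep_nat (n i) (x i : ℕ) (y i : ℕ) (D x y) t (hn i) (x i).isLt (y i).isLt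
      (dist_coord_le_D x y i) ht

lemma gseq_interior (hn : ∀ i, 3 ≤ n i) (x y : PV n) (t : ℕ) (h0 : 0 < t) (h1 : t < D x y) :
    gseq x y t ∈ Inter n := by
  intro i
  rw [gseq_val, if_neg (by omega), if_neg (by omega)]
  have := hn i
  simp only [clampN]
  omega

lemma visible_compl (hn : ∀ i, 3 ≤ n i) (x y : PV n) :
    Visible (PGr n) (Inter n)ᶜ x y := by
  rcases Nat.eq_zero_or_pos (D x y) with h0 | hpos
  · have hxy : x = y := funext fun i => Fin.ext
      (Nat.eq_of_dist_eq_zero (by have := dist_coord_le_D x y i; omega))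
    subst hxy
    exact ⟨Walk.nil, by simp [SimpleGraph.dist_self], by simp⟩
  · refine ⟨(mkWalk (PGr n) (gseq x y) (D x y) (fun t ht => gseq_adj hn x y t ht)).copy
      (gseq_zero x y) (gseq_last x y hpos), ?_, ?_⟩
    · rw [Walk.length_copy, mkWalk_length, dist_eq]
    · intro v hv hvX
      rw [Walk.support_copy] at hv
      obtain ⟨t, ht, rfl⟩ := mkWalk_support _ _ _ v hv
      rcases Nat.eq_zero_or_pos t with rfl | ht0
      · exact Or.inl (gseq_zero x y)
      rcases Nat.eq_or_lt_of_le ht with rfl | ht1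
      · exact Or.inr (gseq_last x y hpos)
      · exact absurd (gseq_interior hn x y t ht0 ht1) hvX

/-! ### counting -/

noncomputable def minv (w : PV n) : ℕ := sInf (Set.range fun i => (w i : ℕ))

lemma minv_le (w : PV n) (i : Fin k) : minv w ≤ (w i : ℕ) :=
  Nat.sInf_le ⟨i, rfl⟩

lemma exists_minv (hk : 0 < k) (w : PV n) : ∃ i, (w i : ℕ) = minv w := by
  obtain ⟨i, hi⟩ := Nat.sInf_mem (s := Set.range fun i => (w i : ℕ))
    ⟨(w ⟨0, hk⟩ : ℕ), ⟨0, hk⟩, rfl⟩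
  exact ⟨i, hi⟩

noncomputable def bV (w : PV n) : PV n := fun i =>
  ⟨(w i : ℕ) - minv w, lt_of_le_of_lt (Nat.sub_le _ _) (w i).isLt⟩

lemma bV_val (w : PV n) (i : Fin k) : (bV w i : ℕ) = (w i : ℕ) - minv w := rfl

lemma minv_bV (hk : 0 < k) (w : PV n) : minv (bV w) = 0 := by
  obtain ⟨i, hi⟩ := exists_minv hk w
  have h1 := minv_le (bV w) i
  have h2 : (bV w i : ℕ) = 0 := by rw [bV_val]; omega
  omega

noncomputable def Lb (b : PV n) : ℕ := sInf (Set.range fun i => n i - 1 - (b i : ℕ))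

lemma Lb_le (b : PV n) (i : Fin k) : Lb b ≤ n i - 1 - (b i : ℕ) :=
  Nat.sInf_le ⟨i, rfl⟩

lemma le_Lb (hk : 0 < k) {b : PV n} {t : ℕ} (h : ∀ i, t ≤ n i - 1 - (b i : ℕ)) : t ≤ Lb b := by
  refine le_csInf ⟨_, ⟨⟨0, hk⟩, rfl⟩⟩ ?_
  rintro _ ⟨i, rfl⟩
  exact h i

def ptN (b : PV n) (t : ℕ) : PV n := fun i =>
  ⟨min ((b i : ℕ) + t) (n i - 1),
    lt_of_le_of_lt (min_le_right _ _) (by have := (b i).isLt; omega)⟩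

lemma ptN_val {b : PV n} {t : ℕ} (ht : t ≤ Lb b) (i : Fin k) :
    (ptN b t i : ℕ) = (b i : ℕ) + t := by
  have h1 := Lb_le b i
  have h2 := (b i).isLt
  show min ((b i : ℕ) + t) (n i - 1) = _
  omega

lemma minv_ptN (hk : 0 < k) {b : PV n} (hb : minv b = 0) {t : ℕ} (ht : t ≤ Lb b) :
    minv (ptN b t) = t := by
  obtain ⟨i0, hi0⟩ := exists_minv hk b
  have h1 : (ptN b t i0 : ℕ) = t := by rw [ptN_val ht]; omega
  have h3 := minv_le (ptN b t) i0
  have h4 : t ≤ minv (ptN b t) := by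
    refine le_csInf ⟨_, ⟨⟨0, hk⟩, rfl⟩⟩ ?_
    rintro _ ⟨i, rfl⟩
    show t ≤ (ptN b t i : ℕ)
    rw [ptN_val ht]
    omega
  omega

lemma bV_ptN (hk : 0 < k) {b : PV n} (hb : minv b = 0) {t : ℕ} (ht : t ≤ Lb b) :
    bV (ptN b t) = b := by
  funext i
  apply Fin.ext
  rw [bV_val, minv_ptN hk hb ht, ptN_val ht]
  omega

lemma eq_ptN_of_bV (hk : 0 < k) {w b : PV n} (hw : bV w = b) :
    minv w ≤ Lb b ∧ w = ptN b (minv w) := by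
  subst hw
  have hL : minv w ≤ Lb (bV w) := le_Lb hk fun i => by
    have h1 := minv_le w i
    have h2 := (w i).isLt
    rw [bV_val]
    omega
  refine ⟨hL, funext fun i => Fin.ext ?_⟩
  rw [ptN_val hL, bV_val]
  have := minv_le w i
  omega

lemma ptN_inj (hk : 0 < k) {b : PV n} {s t : ℕ} (hs : s ≤ Lb b) (ht : t ≤ Lb b)
    (h : ptN b s = ptN b t) : s = t := by
  have hi : (ptN b s ⟨0, hk⟩ : ℕ) = (ptN b t ⟨0, hk⟩ : ℕ) :=
    congrArg Fin.val (congrFun h _)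
  rw [ptN_val hs, ptN_val ht] at hi
  omega

lemma no_three (hk : 0 < k) {X : Set (PV n)} (hX : IsMVSet (PGr n) X) {b : PV n}
    {t1 t2 t3 : ℕ} (h12 : t1 < t2) (h23 : t2 < t3) (hL : t3 ≤ Lb b)
    (m1 : ptN b t1 ∈ X) (m2 : ptN b t2 ∈ X) (m3 : ptN b t3 ∈ X) : False := by
  obtain ⟨p, hlen, hsup⟩ := hX _ m1 _ m3
  have hD : D (ptN b t1) (ptN b t3) = t3 - t1 := by
    have hf : (fun i => Nat.dist (ptN b t1 i : ℕ) (ptN b t3 i : ℕ)) = fun _ => t3 - t1 := by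
      funext i
      rw [ptN_val (by omega : t1 ≤ Lb b), ptN_val hL]
      simp only [Nat.dist]
      omega
    rw [D, hf]
    exact Finset.sup_const ⟨⟨0, hk⟩, Finset.mem_univ _⟩ _
  rw [dist_eq, hD] at hlen
  have hmem : ptN b t2 ∈ p.support := by
    refine forced p (t2 - t1) (ptN b t2) (fun i => ?_) (by omega) (fun i => ?_)
    · rw [ptN_val (by omega : t1 ≤ Lb b), ptN_val hL, hlen]; omega
    · rw [ptN_val (by omega : t2 ≤ Lb b), ptN_val (by omega : t1 ≤ Lb b)]; omega
  rcases hsup _ hmem m2 with hc | hc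
  · have hcv := congrArg Fin.val (congrFun hc ⟨0, hk⟩)
    rw [ptN_val (by omega : t2 ≤ Lb b), ptN_val (by omega : t1 ≤ Lb b)] at hcv
    omega
  · have hcv := congrArg Fin.val (congrFun hc ⟨0, hk⟩)
    rw [ptN_val (by omega : t2 ≤ Lb b), ptN_val hL] at hcv
    omega

def interEquiv (hn : ∀ i, 3 ≤ n i) : (Inter n) ≃ ∀ i, Fin (n i - 2) where
  toFun w i := ⟨(w.1 i : ℕ) - 1, by have h := w.2 i; have := hn i; omega⟩
  invFun v := ⟨fun i => ⟨(v i : ℕ) + 1, by have := (v i).isLt; have := hn i; omega⟩,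
    fun i => by
      have h1 := (v i).isLt
      show 1 ≤ (v i : ℕ) + 1 ∧ (v i : ℕ) + 1 ≤ n i - 2
      omega⟩
  left_inv w := by
    apply Subtype.ext; funext i; apply Fin.ext
    have h := w.2 i
    simp only
    omega
  right_inv v := by funext i; apply Fin.ext; simp

lemma ncard_inter (hn : ∀ i, 3 ≤ n i) : (Inter n).ncard = ∏ i, (n i - 2) := by
  rw [← Nat.card_coe_set_eq, Nat.card_congr (interEquiv hn)]
  simp [Nat.card_pi, Nat.card_eq_fintype_card]

lemma ncard_inter_compl (hn : ∀ i, 3 ≤ n i) :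
    ((Inter n)ᶜ).ncard = (∏ i, n i) - ∏ i, (n i - 2) := by
  have h1 := Set.ncard_add_ncard_compl (Inter n) (Set.toFinite _) (Set.toFinite _)
  have h2 := ncard_inter hn
  have h3 : Nat.card (PV n) = ∏ i, n i := by
    simp [Nat.card_eq_fintype_card]
  omega

lemma mv_card_le (hk : 0 < k) (hn : ∀ i, 3 ≤ n i) (X : Set (PV n))
    (hX : IsMVSet (PGr n) X) : X.ncard ≤ (∏ i, n i) - ∏ i, (n i - 2) := by
  classical
  set A : Finset (PV n) := Finset.univ.filter (· ∈ Inter n) with hA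
  set B : Finset (PV n) := Finset.univ.filter (· ∉ X) with hB
  set XF : Finset (PV n) := Finset.univ.filter (· ∈ X) with hXF
  have hXn : X.ncard = XF.card := by
    rw [← Set.ncard_coe_finset XF]
    congr 1
    ext w
    simp [hXF]
  have hcardV : Fintype.card (PV n) = ∏ i, n i := by simp
  have hpart : XF.card + B.card = ∏ i, n i := by
    have h := Finset.card_filter_add_card_filter_not
      (s := (Finset.univ : Finset (PV n))) (p := (· ∈ X))
    rw [Finset.card_univ, hcardV] at h
    exact h
  have hAcard : A.card = ∏ i, (n i - 2) := by
    rw [← Set.ncard_coe_finset A]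
    have hco : (↑A : Set (PV n)) = Inter n := by ext w; simp [hA]
    rw [hco, ncard_inter hn]
  set T : Finset (PV n) := Finset.univ.image bV with hT
  have hAsum : A.card = ∑ b ∈ T, (A.filter fun w => bV w = b).card :=
    Finset.card_eq_sum_card_fiberwise fun w _ => by
      rw [hT]; exact Finset.mem_image_of_mem bV (Finset.mem_univ w)
  have hBsum : B.card = ∑ b ∈ T, (B.filter fun w => bV w = b).card :=
    Finset.card_eq_sum_card_fiberwise fun w _ => by
      rw [hT]; exact Finset.mem_image_of_mem bV (Finset.mem_univ w)
  have hfib : ∀ b ∈ T, (A.filter fun w => bV w = b).card ≤ (B.filter fun w => bV w = b).card := by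
    intro b _
    by_cases hb : minv b = 0
    · -- the honest case
      have hfibEq : (Finset.univ.filter fun w => bV w = b) =
          (Finset.Icc 0 (Lb b)).image (ptN b) := by
        ext w
        simp only [Finset.mem_filter, Finset.mem_univ, true_and, Finset.mem_image,
          Finset.mem_Icc]
        constructor
        · intro hw
          obtain ⟨hL, hw2⟩ := eq_ptN_of_bV hk hw
          exact ⟨minv w, ⟨Nat.zero_le _, hL⟩, hw2.symm⟩
        · rintro ⟨t, ⟨-, ht⟩, rfl⟩
          exact bV_ptN hk hb ht
      have hFcard : (Finset.univ.filter fun w => bV w = b).card = Lb b + 1 := by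
        rw [hfibEq, Finset.card_image_of_injOn, Nat.card_Icc]
        · omega
        · intro s hs t ht h
          exact ptN_inj hk (Finset.mem_Icc.1 hs).2 (Finset.mem_Icc.1 ht).2 h
      have hAfib : (A.filter fun w => bV w = b) = (Finset.Icc 1 (Lb b - 1)).image (ptN b) := by
        ext w
        simp only [hA, Finset.mem_filter, Finset.mem_univ, true_and, Finset.mem_image,
          Finset.mem_Icc]
        constructor
        · rintro ⟨hwI, hw⟩
          obtain ⟨hL, hw2⟩ := eq_ptN_of_bV hk hw
          have hval : ∀ i, (w i : ℕ) = (b i : ℕ) + minv w := by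
            intro i
            have h2 := congrArg Fin.val (congrFun hw2 i)
            rwa [ptN_val hL] at h2
          refine ⟨minv w, ⟨?_, ?_⟩, hw2.symm⟩
          · obtain ⟨i0, hi0⟩ := exists_minv hk b
            have h1 := (hwI i0).1
            have h2 := hval i0
            omega
          · have hstep : minv w + 1 ≤ Lb b := le_Lb hk fun i => by
              have h1 := (hwI i).2
              have h2 := hval i
              have h3 := hn i
              omega
            omega
        · rintro ⟨t, ⟨ht1, ht2⟩, rfl⟩
          have htL : t ≤ Lb b := by omega
          refine ⟨fun i => ?_, bV_ptN hk hb htL⟩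
          have hv := ptN_val htL i
          have h3 := Lb_le b i
          have h4 := hn i
          exact ⟨by omega, by omega⟩
      have hAcard2 : (A.filter fun w => bV w = b).card = Lb b - 1 := by
        rw [hAfib, Finset.card_image_of_injOn, Nat.card_Icc]
        · omega
        · intro s hs t ht h
          exact ptN_inj hk (by have := (Finset.mem_Icc.1 hs).2; omega)
            (by have := (Finset.mem_Icc.1 ht).2; omega) h
      have hXfib : ((Finset.univ.filter fun w => bV w = b).filter fun w => w ∈ X).card ≤ 2 := by
        by_contra hc
        push_neg at hc
        obtain ⟨w1, w2, w3, hw1, hw2, hw3, hne12, hne13, hne23⟩ :=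
          Finset.two_lt_card_iff.1 hc
        simp only [Finset.mem_filter, Finset.mem_univ, true_and] at hw1 hw2 hw3
        obtain ⟨hL1, he1⟩ := eq_ptN_of_bV hk hw1.1
        obtain ⟨hL2, he2⟩ := eq_ptN_of_bV hk hw2.1
        obtain ⟨hL3, he3⟩ := eq_ptN_of_bV hk hw3.1
        set t1 := minv w1
        set t2 := minv w2
        set t3 := minv w3
        have m1 : ptN b t1 ∈ X := he1 ▸ hw1.2
        have m2 : ptN b t2 ∈ X := he2 ▸ hw2.2
        have m3 : ptN b t3 ∈ X := he3 ▸ hw3.2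
        have ht12 : t1 ≠ t2 := fun h => hne12 (by rw [he1, he2, h])
        have ht13 : t1 ≠ t3 := fun h => hne13 (by rw [he1, he3, h])
        have ht23 : t2 ≠ t3 := fun h => hne23 (by rw [he2, he3, h])
        have key : ∀ a c d : ℕ, a < c → c < d → d ≤ Lb b →
            ptN b a ∈ X → ptN b c ∈ X → ptN b d ∈ X → False :=
          fun a c d u1 u2 u3 v1 v2 v3 => no_three hk hX u1 u2 u3 v1 v2 v3
        rcases Nat.lt_trichotomy t1 t2 with ha | ha | ha
        · rcases Nat.lt_trichotomy t2 t3 with hb2 | hb2 | hb2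
          · exact key t1 t2 t3 ha hb2 hL3 m1 m2 m3
          · exact ht23 hb2
          · rcases Nat.lt_trichotomy t1 t3 with hc2 | hc2 | hc2
            · exact key t1 t3 t2 hc2 hb2 hL2 m1 m3 m2
            · exact ht13 hc2
            · exact key t3 t1 t2 hc2 ha hL2 m3 m1 m2
        · exact ht12 ha
        · rcases Nat.lt_trichotomy t1 t3 with hb2 | hb2 | hb2
          · exact key t2 t1 t3 ha hb2 hL3 m2 m1 m3
          · exact ht13 hb2
          · rcases Nat.lt_trichotomy t2 t3 with hc2 | hc2 | hc2
            · exact key t2 t3 t1 hc2 hb2 hL1 m2 m3 m1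
            · exact ht23 hc2
            · exact key t3 t2 t1 hc2 ha hL1 m3 m2 m1
      have hsplit : ((Finset.univ.filter fun w => bV w = b).filter fun w => w ∈ X).card
          + ((Finset.univ.filter fun w => bV w = b).filter fun w => ¬ w ∈ X).card
          = Lb b + 1 := by
        rw [Finset.card_filter_add_card_filter_not, hFcard]
      have hBeq : (B.filter fun w => bV w = b) =
          (Finset.univ.filter fun w => bV w = b).filter fun w => ¬ w ∈ X := by
        ext w
        simp only [hB, Finset.mem_filter, Finset.mem_univ, true_and]
        tauto
      rw [hAcard2, hBeq]
      omega
    · have he : (A.filter fun w => bV w = b) = ∅ :=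
        Finset.filter_false_of_mem fun w _ hc => hb (hc ▸ minv_bV hk w)
      simp [he]
  have hABle : A.card ≤ B.card := by
    rw [hAsum, hBsum]
    exact Finset.sum_le_sum hfib
  rw [hXn]
  omega

end MVAux

theorem stmt_10 {k : ℕ} (hk : 2 ≤ k) (n : Fin k → ℕ) (hn : ∀ i, 3 ≤ n i) :
    mu (strongProdPi fun i => SimpleGraph.pathGraph (n i)) =
      (∏ i, n i) - ∏ i, (n i - 2) := by
  have hk0 : 0 < k := by omega
  have hmem : (∏ i, n i) - ∏ i, (n i - 2) ∈
      {m | ∃ X : Set (MVAux.PV n), IsMVSet (MVAux.PGr n) X ∧ X.ncard = m} :=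
    ⟨(MVAux.Inter n)ᶜ, fun x _ y _ => MVAux.visible_compl hn x y, MVAux.ncard_inter_compl hn⟩
  have hub : ∀ m ∈ {m | ∃ X : Set (MVAux.PV n), IsMVSet (MVAux.PGr n) X ∧ X.ncard = m},
      m ≤ (∏ i, n i) - ∏ i, (n i - 2) := by
    rintro m ⟨X, hX, rfl⟩
    exact MVAux.mv_card_le hk0 hn X hX
  rw [mu]
  exact le_antisymm (csSup_le ⟨_, hmem⟩ hub) (le_csSup ⟨_, hub⟩ hmem)
end

section
/- Let k ≥ 1 and let G_1, …, G_k be finite connected non-complete simple graphs, each containing a universal vertex. Then μt(G_1 ⊠ ⋯ ⊠ G_k) = ∏_{i=1}^k n(G_i) − 1. -/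
open SimpleGraph

theorem stmt_11 {k : ℕ} (hk : 1 ≤ k) {V : Fin k → Type*} [∀ i, Fintype (V i)]
    (G : ∀ i, SimpleGraph (V i)) (hconn : ∀ i, (G i).Connected)
    (hnc : ∀ i, G i ≠ ⊤) (hu : ∀ i, ∃ v, _root_.IsUniversal (G i) v) :
    muT (strongProdPi G) = (∏ i, Fintype.card (V i)) - 1 := by
  classical
  set u : ∀ i, V i := fun i => (hu i).choose with hu_def
  have huniv : ∀ x : ∀ i, V i, x ≠ u → (strongProdPi G).Adj u x := by
    intro x hx
    refine ⟨Ne.symm hx, fun i => ?_⟩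
    by_cases h : x i = u i
    · exact Or.inl h.symm
    · exact Or.inr ((hu i).choose_spec (x i) h)
  have hreach : ∀ x y : ∀ i, V i, (strongProdPi G).Reachable x y := by
    have hr : ∀ x : ∀ i, V i, (strongProdPi G).Reachable u x := by
      intro x
      by_cases h : x = u
      · subst h; exact Reachable.refl u
      · exact (huniv x h).reachable
    exact fun x y => (hr x).symm.trans (hr y)
  set i0 : Fin k := ⟨0, hk⟩ with hi0
  obtain ⟨a, b, hab, hnadj⟩ : ∃ a b : V i0, a ≠ b ∧ ¬ (G i0).Adj a b := by
    by_contra h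
    push_neg at h
    apply hnc i0
    ext p q
    simp only [top_adj]
    exact ⟨fun h' => h'.ne, fun hne => h p q hne⟩
  set x0 : ∀ i, V i := Function.update u i0 a with hx0
  set y0 : ∀ i, V i := Function.update u i0 b with hy0
  have hxyne : x0 ≠ y0 := by
    intro h
    apply hab
    have := congrFun h i0
    simpa [hx0, hy0] using this
  have hxy_nadj : ¬ (strongProdPi G).Adj x0 y0 := by
    rintro ⟨-, hall⟩
    have := hall i0
    simp only [hx0, hy0, Function.update_self] at this
    rcases this with h | h
    · exact hab h
    · exact hnadj h
  -- no total mutual-visibility set contains all vertices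
  have hnotall : ∀ X : Set (∀ i, V i), IsTMVSet (strongProdPi G) X → ∃ v, v ∉ X := by
    intro X hX
    by_contra h
    push_neg at h
    obtain ⟨p, hlen, hsup⟩ := hX x0 y0
    obtain ⟨c, hadj, q, hpe⟩ := Walk.not_nil_iff.mp (Walk.not_nil_of_ne (p := p) hxyne)
    have hc : c = x0 ∨ c = y0 :=
      hsup c (by rw [hpe]; simp [Walk.support_cons, q.start_mem_support]) (h c)
    rcases hc with rfl | rfl
    · exact (strongProdPi G).irrefl hadj
    · exact hxy_nadj hadj
  -- the complement of the universal vertex is a total mutual-visibility set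
  have hTMV : IsTMVSet (strongProdPi G) ({u}ᶜ : Set (∀ i, V i)) := by
    intro x y
    by_cases hxy : x = y
    · subst hxy
      refine ⟨Walk.nil, by simp [SimpleGraph.dist_self], ?_⟩
      intro v hv _
      simp at hv
      exact Or.inl hv
    by_cases hadj : (strongProdPi G).Adj x y
    · refine ⟨Walk.cons hadj Walk.nil, ?_, ?_⟩
      · have := (SimpleGraph.dist_eq_one_iff_adj (G := strongProdPi G)).mpr hadj
        simp [this]
      · intro v hv _
        simpa using hv
    · have hxu : x ≠ u := by
        rintro rfl
        exact hadj (huniv y (fun h => hxy h.symm))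
      have hyu : y ≠ u := by
        rintro rfl
        exact hadj ((huniv x hxu).symm)
      refine ⟨Walk.cons (huniv x hxu).symm (Walk.cons (huniv y hyu) Walk.nil), ?_, ?_⟩
      · have hle : (strongProdPi G).dist x y ≤ 2 := by
          have := SimpleGraph.dist_le
            (Walk.cons (huniv x hxu).symm (Walk.cons (huniv y hyu) Walk.nil))
          simpa using this
        have h0 : (strongProdPi G).dist x y ≠ 0 := by
          intro h
          exact hxy (((hreach x y).dist_eq_zero_iff).mp h)
        have h1 : (strongProdPi G).dist x y ≠ 1 := by
          intro h
          exact hadj (SimpleGraph.dist_eq_one_iff_adj.mp h)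
        simp only [Walk.length_cons, Walk.length_nil]
        omega
      · intro v hv hvX
        simp only [Walk.support_cons, Walk.support_nil, List.mem_cons,
          List.mem_singleton] at hv
        rcases hv with rfl | rfl | rfl | h
        · exact Or.inl rfl
        · exact absurd rfl hvX
        · exact Or.inr rfl
        · simp at h
  have hcardpi : Fintype.card (∀ i, V i) = ∏ i, Fintype.card (V i) :=
    Fintype.card_pi
  have hncompl : ∀ v : ∀ i, V i,
      ({v}ᶜ : Set (∀ i, V i)).ncard = (∏ i, Fintype.card (V i)) - 1 := by
    intro v
    have : ({v}ᶜ : Set (∀ i, V i)) = Set.univ \ {v} := by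
      ext w; simp
    rw [this, Set.ncard_diff_singleton_of_mem (Set.mem_univ v), Set.ncard_univ,
      Nat.card_eq_fintype_card, hcardpi]
  have hmem : (∏ i, Fintype.card (V i)) - 1 ∈
      {n | ∃ X : Set (∀ i, V i), IsTMVSet (strongProdPi G) X ∧ X.ncard = n} :=
    ⟨({u}ᶜ : Set (∀ i, V i)), hTMV, hncompl u⟩
  have hub : ∀ n ∈ {n | ∃ X : Set (∀ i, V i), IsTMVSet (strongProdPi G) X ∧ X.ncard = n},
      n ≤ (∏ i, Fintype.card (V i)) - 1 := by
    rintro n ⟨X, hX, rfl⟩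
    obtain ⟨v, hv⟩ := hnotall X hX
    have hsub : X ⊆ ({v}ᶜ : Set (∀ i, V i)) := by
      intro w hw
      simp only [Set.mem_compl_iff, Set.mem_singleton_iff]
      rintro rfl
      exact hv hw
    calc X.ncard ≤ ({v}ᶜ : Set (∀ i, V i)).ncard :=
          Set.ncard_le_ncard hsub (Set.toFinite _)
      _ = (∏ i, Fintype.card (V i)) - 1 := hncompl v
  exact le_antisymm (csSup_le ⟨_, hmem⟩ hub) (le_csSup ⟨_, hub⟩ hmem)
end

section
/- For all finite connected simple graphs G and H, the strong product satisfies μ(G ⊠ H) ≥ μ(G)·μ(H); moreover, if S_G is a mutual-visibility set of G and S_H is a mutual-visibility set of H, then S_G × S_H is a mutual-visibility set of G ⊠ H. -/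
open SimpleGraph

/-!
Shortest paths in `G ⊠ H` have length `max (d_G) (d_H)`: a walk in the product projects to walks
in the factors that are no longer, and conversely two paths can be walked simultaneously, the
shorter one waiting at its end. Walking two visibility paths this way, each interior vertex of the
product walk has as its coordinate along the longer path an interior vertex of that path, which
lies outside the corresponding visibility set.
-/

namespace SimpleGraph

variable {V W : Type*} {G : SimpleGraph V} {G' : SimpleGraph W}

lemma Walk.exists_walk_length_le_of_adj_imp {f : V → W}
    (hf : ∀ ⦃u v⦄, G.Adj u v → f u = f v ∨ G'.Adj (f u) (f v)) :
    ∀ {u v : V} (p : G.Walk u v), ∃ q : G'.Walk (f u) (f v), q.length ≤ p.length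
  | _, _, .nil => ⟨.nil, le_rfl⟩
  | _, _, .cons h p => by
    obtain ⟨q, hq⟩ := exists_walk_length_le_of_adj_imp hf p
    rcases hf h with heq | hadj
    · exact ⟨q.copy heq.symm rfl, by simp only [Walk.length_copy, Walk.length_cons]; omega⟩
    · exact ⟨.cons hadj q, by simp only [Walk.length_cons]; omega⟩

lemma Reachable.dist_le_dist_of_adj_imp {f : V → W}
    (hf : ∀ ⦃u v⦄, G.Adj u v → f u = f v ∨ G'.Adj (f u) (f v)) {u v : V}
    (h : G.Reachable u v) : G'.dist (f u) (f v) ≤ G.dist u v := by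
  obtain ⟨p, hp⟩ := h.exists_walk_length_eq_dist
  obtain ⟨q, hq⟩ := Walk.exists_walk_length_le_of_adj_imp hf p
  exact (dist_le q).trans (hp ▸ hq)

lemma Walk.IsPath.eq_zero_or_eq_length_of_getVert_mem {S : Set V} {u v : V} {p : G.Walk u v}
    (hp : p.IsPath) (hpS : ∀ w ∈ p.support, w ∈ S → w = u ∨ w = v) {i : ℕ}
    (hi : i ≤ p.length) (hS : p.getVert i ∈ S) : i = 0 ∨ i = p.length :=
  (hpS _ (p.getVert_mem_support i) hS).imp (hp.getVert_eq_start_iff hi).mp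
    (hp.getVert_eq_end_iff hi).mp

end SimpleGraph

open SimpleGraph

section StrongProd

variable {α β : Type*} {G : SimpleGraph α} {H : SimpleGraph β}

lemma strongProd_adj_of_left {a a' : α} (h : G.Adj a a') (b : β) :
    (strongProd G H).Adj (a, b) (a', b) :=
  Or.inl ⟨h, rfl⟩

lemma strongProd_adj_of_right (a : α) {b b' : β} (h : H.Adj b b') :
    (strongProd G H).Adj (a, b) (a, b') :=
  Or.inr (Or.inl ⟨rfl, h⟩)

lemma strongProd_adj_of_adj {a a' : α} {b b' : β} (h : G.Adj a a') (h' : H.Adj b b') :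
    (strongProd G H).Adj (a, b) (a', b') :=
  Or.inr (Or.inr ⟨h, h'⟩)

lemma strongProd_adj_fst ⦃x y : α × β⦄ (h : (strongProd G H).Adj x y) :
    x.1 = y.1 ∨ G.Adj x.1 y.1 := by
  rcases h with ⟨h, -⟩ | ⟨h, -⟩ | ⟨h, -⟩ <;> tauto

lemma strongProd_adj_snd ⦃x y : α × β⦄ (h : (strongProd G H).Adj x y) :
    x.2 = y.2 ∨ H.Adj x.2 y.2 := by
  rcases h with ⟨-, h⟩ | ⟨-, h⟩ | ⟨-, h⟩ <;> tauto

def SimpleGraph.Walk.strongProdZip : ∀ {a a' : α} {b b' : β},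
    G.Walk a a' → H.Walk b b' → (strongProd G H).Walk (a, b) (a', b')
  | _, _, _, _, .nil, .nil => .nil
  | _, _, b, _, .cons h p, .nil => .cons (strongProd_adj_of_left h b) (strongProdZip p .nil)
  | a, _, _, _, .nil, .cons h q => .cons (strongProd_adj_of_right a h) (strongProdZip .nil q)
  | _, _, _, _, .cons h p, .cons h' q => .cons (strongProd_adj_of_adj h h') (strongProdZip p q)

lemma SimpleGraph.Walk.length_strongProdZip : ∀ {a a' : α} {b b' : β}
    (p : G.Walk a a') (q : H.Walk b b'),
    (p.strongProdZip q).length = max p.length q.length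
  | _, _, _, _, .nil, .nil => by simp [strongProdZip]
  | _, _, _, _, .cons _ p, .nil => by
    simp [strongProdZip, length_strongProdZip p .nil]
  | _, _, _, _, .nil, .cons _ q => by
    simp [strongProdZip, length_strongProdZip .nil q]
  | _, _, _, _, .cons _ p, .cons _ q => by
    simp [strongProdZip, length_strongProdZip p q]

lemma SimpleGraph.Walk.getVert_strongProdZip : ∀ {a a' : α} {b b' : β}
    (p : G.Walk a a') (q : H.Walk b b') (i : ℕ),
    (p.strongProdZip q).getVert i = (p.getVert i, q.getVert i)
  | _, _, _, _, .nil, .nil, _ => by simp [strongProdZip]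
  | _, _, _, _, .cons _ p, .nil, i => by
    cases i <;> simp [strongProdZip, getVert_strongProdZip p .nil]
  | _, _, _, _, .nil, .cons _ q, i => by
    cases i <;> simp [strongProdZip, getVert_strongProdZip .nil q]
  | _, _, _, _, .cons _ p, .cons _ q, i => by
    cases i <;> simp [strongProdZip, getVert_strongProdZip p q]

lemma strongProd_dist {a a' : α} {b b' : β} (hG : G.Reachable a a') (hH : H.Reachable b b') :
    (strongProd G H).dist (a, b) (a', b') = max (G.dist a a') (H.dist b b') := by
  obtain ⟨p, hp⟩ := hG.exists_walk_length_eq_dist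
  obtain ⟨q, hq⟩ := hH.exists_walk_length_eq_dist
  have hR : (strongProd G H).Reachable (a, b) (a', b') := ⟨p.strongProdZip q⟩
  refine le_antisymm ?_ (max_le ?_ ?_)
  · calc _ ≤ (p.strongProdZip q).length := dist_le _
      _ = _ := by rw [Walk.length_strongProdZip, hp, hq]
  · exact hR.dist_le_dist_of_adj_imp (f := Prod.fst) strongProd_adj_fst
  · exact hR.dist_le_dist_of_adj_imp (f := Prod.snd) strongProd_adj_snd

lemma Visible.strongProd {SG : Set α} {SH : Set β} {g g' : α} {h h' : β}
    (hg : Visible G SG g g') (hh : Visible H SH h h') :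
    Visible (strongProd G H) (SG ×ˢ SH) (g, h) (g', h') := by
  obtain ⟨p, hp, hpS⟩ := hg
  obtain ⟨q, hq, hqS⟩ := hh
  refine ⟨p.strongProdZip q, ?_, ?_⟩
  · rw [Walk.length_strongProdZip, hp, hq, strongProd_dist p.reachable q.reachable]
  rintro _ hv ⟨hvG, hvH⟩
  obtain ⟨i, rfl, hi⟩ := Walk.mem_support_iff_exists_getVert.mp hv
  rw [Walk.length_strongProdZip] at hi
  rw [Walk.getVert_strongProdZip] at hvG hvH ⊢
  have hend : i = 0 ∨ max p.length q.length ≤ i := by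
    rcases le_total p.length q.length with hle | hle
    · have := (q.isPath_of_length_eq_dist hq).eq_zero_or_eq_length_of_getVert_mem hqS
        (hi.trans_eq (max_eq_right hle)) hvH
      omega
    · have := (p.isPath_of_length_eq_dist hp).eq_zero_or_eq_length_of_getVert_mem hpS
        (hi.trans_eq (max_eq_left hle)) hvG
      omega
  rcases hend with rfl | hend
  · exact Or.inl (by simp)
  · exact Or.inr (by rw [p.getVert_of_length_le (le_of_max_le_left hend),
      q.getVert_of_length_le (le_of_max_le_right hend)])

lemma IsMVSet.strongProd {SG : Set α} {SH : Set β} (hSG : IsMVSet G SG) (hSH : IsMVSet H SH) :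
    IsMVSet (strongProd G H) (SG ×ˢ SH) := by
  rintro ⟨g, h⟩ ⟨hg, hh⟩ ⟨g', h'⟩ ⟨hg', hh'⟩
  exact (hSG g hg g' hg').strongProd (hSH h hh h' hh')

end StrongProd

section MutualVisibilityNumber

variable {V : Type*} [Finite V] {G : SimpleGraph V}

lemma bddAbove_ncard_isMVSet : BddAbove {n | ∃ X : Set V, IsMVSet G X ∧ X.ncard = n} :=
  ⟨Nat.card V, by rintro _ ⟨X, -, rfl⟩; exact Set.ncard_le_card X⟩

lemma IsMVSet.ncard_le_mu {X : Set V} (hX : IsMVSet G X) : X.ncard ≤ mu G :=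
  le_csSup bddAbove_ncard_isMVSet ⟨X, hX, rfl⟩

variable (G) in
lemma exists_isMVSet_ncard_eq_mu : ∃ X : Set V, IsMVSet G X ∧ X.ncard = mu G :=
  Nat.sSup_mem (s := {n | ∃ X : Set V, IsMVSet G X ∧ X.ncard = n})
    ⟨0, ∅, by simp [IsMVSet], Set.ncard_empty V⟩ bddAbove_ncard_isMVSet

end MutualVisibilityNumber

theorem stmt_12_general {α β : Type*} [Fintype α] [Fintype β]
    (G : SimpleGraph α) (H : SimpleGraph β) :
    mu G * mu H ≤ mu (strongProd G H) ∧
    ∀ (SG : Set α) (SH : Set β), IsMVSet G SG → IsMVSet H SH →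
      IsMVSet (strongProd G H) (SG ×ˢ SH) := by
  refine ⟨?_, fun _ _ => IsMVSet.strongProd⟩
  obtain ⟨SG, hSG, hSGc⟩ := exists_isMVSet_ncard_eq_mu G
  obtain ⟨SH, hSH, hSHc⟩ := exists_isMVSet_ncard_eq_mu H
  calc mu G * mu H = (SG ×ˢ SH).ncard := by rw [Set.ncard_prod, hSGc, hSHc]
    _ ≤ mu (strongProd G H) := (hSG.strongProd hSH).ncard_le_mu

theorem stmt_12 {α β : Type*} [Fintype α] [Fintype β]
    (G : SimpleGraph α) (H : SimpleGraph β) (hG : G.Connected) (hH : H.Connected) :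
    mu G * mu H ≤ mu (strongProd G H) ∧
    ∀ (SG : Set α) (SH : Set β), IsMVSet G SG → IsMVSet H SH →
      IsMVSet (strongProd G H) (SG ×ˢ SH) :=
  stmt_12_general G H
end
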